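/- arXiv:2204.00171 — 3 statements merged into one kernel-verified Lean document; each statement's English description precedes it below -/
import Mathlib

section
/- Suppose E, x*, δ, M, μ, L satisfy Assumption (A) with index k (1 ≤ k ≤ d), let κ = L/μ, and let α ∈ [0,1] satisfy 1 − α > κ·α·(α+5). Let x ∈ ℝ^d with r = ‖x − x*‖₂ < δ, let V_k ∈ ℝ^{d×k} have as columns orthonormal eigenvectors of ∇²E(x) corresponding to its k smallest eigenvalues, and let V̂_k ∈ ℝ^{d×k} be the first k columns of a d×d orthogonal matrix with ‖V_k·V_kᵀ − V̂_k·V̂_kᵀ‖₂ ≤ α. Let β = 2/(L(1−α²) + μ(1−α)) and x⁺ = x − β·(I − 2·V̂_k·V̂_kᵀ)·∇E(x). Then ‖x⁺ − x*‖₂ ≤ (1 − q(α))·r + c(α)·r², where q(α) = (2(1−α) − 2κα(α+5))/(κ(1−α²) + (1−α)) ∈ (0,1) and c(α) = (M/μ)/(κ(1−α²) + (1−α)) > 0. -/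
open Matrix Finset Filter

noncomputable section

abbrev EVec (d : ℕ) := EuclideanSpace ℝ (Fin d)

/-- The operator (spectral) norm of a real matrix, i.e. the norm of the induced
linear map between Euclidean spaces. -/
noncomputable def specNorm {m n : Type*} [Fintype m] [Fintype n] [DecidableEq n]
    (A : Matrix m n ℝ) : ℝ :=
  ‖LinearMap.toContinuousLinearMap (Matrix.toEuclideanLin A)‖

/-- Matrix-vector multiplication on Euclidean space. -/
noncomputable def mulVecE {d : ℕ} (A : Matrix (Fin d) (Fin d) ℝ) (x : EVec d) : EVec d :=
  Matrix.toEuclideanLin A x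

/-- Outer product `v · wᵀ` of two vectors. -/
def outer {d : ℕ} (v w : EVec d) : Matrix (Fin d) (Fin d) ℝ :=
  Matrix.of fun i j => v i * w j

/-- Assumption (A) with index `k` for the energy `E` with Hessian `hess`, saddle point
`xstar`, radius `δ`, Lipschitz constant `M` and eigenvalue bounds `0 < μ < L`:
`E` is twice continuously differentiable, `hess` is the (symmetric) Hessian of `E`,
`∇E(x*) = 0`, the Hessian is `M`-Lipschitz on `U(x*, δ)`, and for every
`x ∈ U(x*, δ)` the eigenvalues `λ₁ ≤ … ≤ λ_d` of `∇²E(x)` satisfy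
`λ₁ ≤ … ≤ λ_k < 0 < λ_{k+1} ≤ … ≤ λ_d` and `μ ≤ |λᵢ| ≤ L`. -/
def AssumptionA {d : ℕ} (k : ℕ) (E : EVec d → ℝ)
    (hess : EVec d → Matrix (Fin d) (Fin d) ℝ)
    (xstar : EVec d) (δ M μ L : ℝ) : Prop :=
  ContDiff ℝ 2 E ∧
  (∀ y, HasFDerivAt (gradient E)
    (LinearMap.toContinuousLinearMap (Matrix.toEuclideanLin (hess y))) y) ∧
  (∀ y, (hess y).IsSymm) ∧
  gradient E xstar = 0 ∧
  0 < δ ∧ 0 < M ∧ 0 < μ ∧ μ < L ∧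
  (∀ x y : EVec d, ‖x - xstar‖ < δ → ‖y - xstar‖ < δ →
    specNorm (hess x - hess y) ≤ M * ‖x - y‖) ∧
  (∀ x : EVec d, ‖x - xstar‖ < δ →
    ∃ (u : Fin d → EVec d) (lam : Fin d → ℝ),
      (∀ i j, (inner ℝ (u i) (u j) : ℝ) = if i = j then 1 else 0) ∧
      (∀ i, mulVecE (hess x) (u i) = lam i • u i) ∧
      Monotone lam ∧
      (∀ i : Fin d, (i : ℕ) < k → lam i < 0) ∧
      (∀ i : Fin d, k ≤ (i : ℕ) → 0 < lam i) ∧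
      (∀ i, μ ≤ |lam i| ∧ |lam i| ≤ L))

namespace ThmAux
variable {d k : ℕ}

lemma mulVecE_apply (A : Matrix (Fin d) (Fin d) ℝ) (w : EVec d) (i : Fin d) :
    mulVecE A w i = ∑ j, A i j * w j := by
  simp [mulVecE, Matrix.toEuclideanLin, Matrix.mulVec, dotProduct]

lemma inner_evec (x y : EVec d) : (inner ℝ x y : ℝ) = ∑ i, x i * y i := by
  simp [PiLp.inner_apply, mul_comm]

lemma mulVecE_transpose (A : Matrix (Fin d) (Fin d) ℝ) (w z : EVec d) :
    (inner ℝ (mulVecE A w) z : ℝ) = inner ℝ w (mulVecE Aᵀ z) := by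
  simp only [inner_evec, mulVecE_apply, Matrix.transpose_apply, Finset.sum_mul, Finset.mul_sum]
  rw [Finset.sum_comm]
  congr 1; ext i; congr 1; ext j; ring

lemma mulVecE_sub_mat (A B : Matrix (Fin d) (Fin d) ℝ) (w : EVec d) :
    mulVecE (A - B) w = mulVecE A w - mulVecE B w := by
  simp [mulVecE, map_sub, LinearMap.sub_apply]

lemma mulVecE_one (w : EVec d) : mulVecE 1 w = w := by
  ext i; simp [mulVecE_apply, Matrix.one_apply]

lemma mulVecE_smul_mat (c : ℝ) (A : Matrix (Fin d) (Fin d) ℝ) (w : EVec d) :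
    mulVecE (c • A) w = c • mulVecE A w := by
  ext i; simp [mulVecE_apply, Finset.mul_sum, mul_assoc]

lemma mulVecE_add (A : Matrix (Fin d) (Fin d) ℝ) (w z : EVec d) :
    mulVecE A (w + z) = mulVecE A w + mulVecE A z := map_add (Matrix.toEuclideanLin A) w z

lemma mulVecE_smul (A : Matrix (Fin d) (Fin d) ℝ) (c : ℝ) (w : EVec d) :
    mulVecE A (c • w) = c • mulVecE A w := map_smul (Matrix.toEuclideanLin A) c w

lemma mulVecE_sum {ι : Type*} (A : Matrix (Fin d) (Fin d) ℝ) (s : Finset ι) (f : ι → EVec d) :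
    mulVecE A (∑ i ∈ s, f i) = ∑ i ∈ s, mulVecE A (f i) := map_sum (Matrix.toEuclideanLin A) f s

lemma norm_mulVecE_le (A : Matrix (Fin d) (Fin d) ℝ) (w : EVec d) :
    ‖mulVecE A w‖ ≤ specNorm A * ‖w‖ :=
  (LinearMap.toContinuousLinearMap (Matrix.toEuclideanLin A)).le_opNorm w

lemma specNorm_neg (A : Matrix (Fin d) (Fin d) ℝ) : specNorm (-A) = specNorm A := by
  unfold specNorm
  rw [map_neg, map_neg, norm_neg]

def colE (V : Matrix (Fin d) (Fin k) ℝ) (j : Fin k) : EVec d :=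
  (WithLp.equiv 2 (Fin d → ℝ)).symm (fun i => V i j)

@[simp] lemma colE_apply (V : Matrix (Fin d) (Fin k) ℝ) (j : Fin k) (i : Fin d) :
    colE V j i = V i j := rfl

lemma proj_formula (V : Matrix (Fin d) (Fin k) ℝ) (w : EVec d) :
    mulVecE (V * Vᵀ) w = ∑ j, (inner ℝ (colE V j) w : ℝ) • colE V j := by
  ext i
  simp only [mulVecE_apply, Matrix.mul_apply, Matrix.transpose_apply, inner_evec]
  rw [WithLp.ofLp_sum, Finset.sum_apply]
  simp only [PiLp.smul_apply, colE_apply, smul_eq_mul]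
  simp only [Finset.sum_mul]
  rw [Finset.sum_comm]
  congr 1; ext j; congr 1; ext l; ring

lemma ortho_cols (V : Matrix (Fin d) (Fin k) ℝ) (h : Vᵀ * V = 1) (j l : Fin k) :
    (inner ℝ (colE V j) (colE V l) : ℝ) = if j = l then 1 else 0 := by
  have := congrFun (congrFun h j) l
  simp only [Matrix.mul_apply, Matrix.transpose_apply, Matrix.one_apply] at this
  simp [inner_evec, this]

lemma on_of_ite {ι : Type*} [Fintype ι] [DecidableEq ι] {u : ι → EVec d}
    (h : ∀ i j, (inner ℝ (u i) (u j) : ℝ) = if i = j then 1 else 0) : Orthonormal ℝ u := by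
  rw [orthonormal_iff_ite]
  intro i j
  simpa using h i j

lemma norm_sq_on_sum {ι : Type*} [Fintype ι] {u : ι → EVec d} (hu : Orthonormal ℝ u)
    (a : ι → ℝ) : ‖∑ i, a i • u i‖ ^ 2 = ∑ i, (a i) ^ 2 := by
  have h := hu.inner_sum a a Finset.univ
  rw [real_inner_self_eq_norm_sq] at h
  rw [h]
  simp [sq]

lemma block_ortho {m : ℕ} (hdm : d = k + m) (V : Matrix (Fin d) (Fin k) ℝ)
    (Vm : Matrix (Fin d) (Fin m) ℝ)
    (h : Matrix.fromCols V Vm * (Matrix.fromCols V Vm)ᵀ = 1) : Vᵀ * V = 1 := by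
  have e : Fin d ≃ Fin k ⊕ Fin m := (finCongr hdm).trans finSumFinEquiv.symm
  have h2 : (Matrix.fromCols V Vm)ᵀ * Matrix.fromCols V Vm = 1 :=
    (Matrix.mul_eq_one_comm_of_equiv e).mp h
  ext i j
  have := congrFun (congrFun h2 (Sum.inl i)) (Sum.inl j)
  simp only [Matrix.mul_apply, Matrix.transpose_apply, Matrix.fromCols_apply_inl,
    Matrix.one_apply, Sum.inl.injEq] at this ⊢
  exact this

lemma refl_isometry (V : Matrix (Fin d) (Fin k) ℝ) (h : Vᵀ * V = 1) (w : EVec d) :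
    ‖w - (2:ℝ) • mulVecE (V * Vᵀ) w‖ = ‖w‖ := by
  have hon : Orthonormal ℝ (colE V) := on_of_ite (ortho_cols V h)
  set a : Fin k → ℝ := fun j => (inner ℝ (colE V j) w : ℝ) with ha
  have hQ : mulVecE (V * Vᵀ) w = ∑ j, a j • colE V j := proj_formula V w
  have h1 : ‖∑ j, a j • colE V j‖ ^ 2 = ∑ j, a j ^ 2 := norm_sq_on_sum hon a
  have h2 : (inner ℝ w (∑ j, a j • colE V j) : ℝ) = ∑ j, a j ^ 2 := by
    rw [inner_sum]
    congr 1; ext j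
    rw [real_inner_smul_right, real_inner_comm]
    simp [ha, sq]
  have hexp : ‖w - (2:ℝ) • mulVecE (V * Vᵀ) w‖ ^ 2 = ‖w‖ ^ 2 := by
    rw [hQ, @norm_sub_sq_real]
    rw [norm_smul, real_inner_smul_right, h2]
    rw [mul_pow]
    rw [h1]
    simp
    ring
  have h3 : (0:ℝ) ≤ ‖w - (2:ℝ) • mulVecE (V * Vᵀ) w‖ := norm_nonneg _
  have h4 : (0:ℝ) ≤ ‖w‖ := norm_nonneg _
  nlinarith [hexp, h3, h4]

lemma on_basis_expansion (hd : 0 < d) {u : Fin d → EVec d} (hu : Orthonormal ℝ u) (w : EVec d) :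
    ∑ i, (inner ℝ (u i) w : ℝ) • u i = w := by
  have : Nonempty (Fin d) := ⟨⟨0, hd⟩⟩
  have hcard : Fintype.card (Fin d) = Module.finrank ℝ (EVec d) := by
    simp [finrank_euclideanSpace_fin]
  let b := basisOfOrthonormalOfCardEqFinrank hu hcard
  have hb : ⇑b = u := coe_basisOfOrthonormalOfCardEqFinrank hu hcard
  let ob := b.toOrthonormalBasis (by rwa [hb])
  have hob : ⇑ob = u := by
    have : ⇑ob = ⇑b := b.coe_toOrthonormalBasis _
    rw [this, hb]
  have := ob.sum_repr' w
  rwa [hob] at this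

lemma proj_kills (V : Matrix (Fin d) (Fin k) ℝ) (u : EVec d)
    (horth : ∀ j, (inner ℝ (colE V j) u : ℝ) = 0) : mulVecE (V * Vᵀ) u = 0 := by
  rw [proj_formula]
  simp [horth]

lemma proj_fixes (hd : 0 < d) (hkd : k ≤ d) (V : Matrix (Fin d) (Fin k) ℝ) (hV : Vᵀ * V = 1)
    (u : Fin d → EVec d) (hu : Orthonormal ℝ u)
    (horth : ∀ j (i : Fin d), k ≤ (i : ℕ) → (inner ℝ (colE V j) (u i) : ℝ) = 0)
    (i : Fin d) (hik : (i : ℕ) < k) : mulVecE (V * Vᵀ) (u i) = u i := by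
  have honV : Orthonormal ℝ (colE V) := on_of_ite (ortho_cols V hV)
  set emb : Fin k → Fin d := Fin.castLE hkd with hemb
  have hembinj : Function.Injective emb := Fin.castLE_injective hkd
  set S1 := Submodule.span ℝ (Set.range (colE V)) with hS1
  set S2 := Submodule.span ℝ (Set.range (u ∘ emb)) with hS2
  have hr1 : Module.finrank ℝ S1 = k := by
    rw [hS1, finrank_span_eq_card honV.linearIndependent]
    simp
  have hr2 : Module.finrank ℝ S2 = k := by
    rw [hS2, finrank_span_eq_card (hu.comp emb hembinj).linearIndependent]
    simp
  have hle : S1 ≤ S2 := by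
    rw [hS1, Submodule.span_le]
    rintro _ ⟨j, rfl⟩
    rw [← on_basis_expansion hd hu (colE V j)]
    apply Submodule.sum_mem
    intro l _
    by_cases hl : (l : ℕ) < k
    · apply Submodule.smul_mem
      apply Submodule.subset_span
      exact ⟨⟨l.1, hl⟩, by simp [hemb, Fin.castLE]⟩
    · have : (inner ℝ (u l) (colE V j) : ℝ) = 0 := by
        rw [real_inner_comm]
        exact horth j l (le_of_not_gt hl)
      rw [this, zero_smul]
      exact Submodule.zero_mem _
  have hEq : S1 = S2 := Submodule.eq_of_le_of_finrank_le hle (le_of_eq (hr2.trans hr1.symm))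
  have hfix : ∀ w ∈ S1, mulVecE (V * Vᵀ) w = w := by
    intro w hw
    induction hw using Submodule.span_induction with
    | mem z hz =>
      obtain ⟨j, rfl⟩ := hz
      rw [proj_formula]
      simp [ortho_cols V hV]
    | zero => exact map_zero (Matrix.toEuclideanLin (V * Vᵀ))
    | add y z _ _ hy hz =>
      show mulVecE _ (y + z) = y + z
      rw [mulVecE_add, hy, hz]
    | smul c y _ hy =>
      show mulVecE _ (c • y) = c • y
      rw [mulVecE_smul, hy]
  apply hfix
  rw [hEq, hS2]
  apply Submodule.subset_span
  exact ⟨⟨i.1, hik⟩, by simp [hemb, Fin.castLE]⟩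

lemma sqle_aux {a b : ℝ} (h : a ^ 2 ≤ b ^ 2) (hb : 0 ≤ b) : a ≤ b := by
  nlinarith [sq_nonneg (a - b), sq_nonneg (a + b)]

lemma taylor_rem (E : EVec d → ℝ) (hess : EVec d → Matrix (Fin d) (Fin d) ℝ)
    (xstar : EVec d) (δ M : ℝ)
    (hE : ContDiff ℝ 2 E)
    (hgrad : ∀ y, HasFDerivAt (gradient E)
      (LinearMap.toContinuousLinearMap (Matrix.toEuclideanLin (hess y))) y)
    (hg0 : gradient E xstar = 0)
    (hLip : ∀ x y : EVec d, ‖x - xstar‖ < δ → ‖y - xstar‖ < δ →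
      specNorm (hess x - hess y) ≤ M * ‖x - y‖)
    (x : EVec d) (hx : ‖x - xstar‖ < δ) :
    ‖gradient E x - mulVecE (hess x) (x - xstar)‖ ≤ M / 2 * ‖x - xstar‖ ^ 2 := by
  set v : EVec d := x - xstar with hv
  set r : ℝ := ‖v‖ with hr
  have hr0 : 0 ≤ r := norm_nonneg _
  have hgradC : ContDiff ℝ 1 (gradient E) := by
    have h1 : ContDiff ℝ 1 (fderiv ℝ E) := hE.fderiv_right (le_refl _)
    have : gradient E = fun y => (InnerProductSpace.toDual ℝ (EVec d)).symm (fderiv ℝ E y) := rfl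
    rw [this]
    exact (InnerProductSpace.toDual ℝ (EVec d)).symm.contDiff.comp h1
  have hhessC : Continuous (fun y : EVec d =>
      LinearMap.toContinuousLinearMap (Matrix.toEuclideanLin (hess y))) := by
    have h1 : Continuous (fderiv ℝ (gradient E)) := hgradC.continuous_fderiv (by norm_num)
    have h2 : (fun y : EVec d => LinearMap.toContinuousLinearMap (Matrix.toEuclideanLin (hess y)))
        = fderiv ℝ (gradient E) := by
      funext y; exact ((hgrad y).fderiv).symm
    rw [h2]; exact h1
  set G : ℝ → EVec d := fun t => gradient E (xstar + t • v) with hG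
  set G' : ℝ → EVec d := fun t =>
    (LinearMap.toContinuousLinearMap (Matrix.toEuclideanLin (hess (xstar + t • v)))) v with hG'
  have hpath : ∀ t : ℝ, HasDerivAt (fun s : ℝ => xstar + s • v) v t := by
    intro t
    simpa using ((hasDerivAt_id t).smul_const v).const_add xstar
  have hderiv : ∀ t : ℝ, HasDerivAt G (G' t) t := by
    intro t
    exact (hgrad (xstar + t • v)).comp_hasDerivAt t (hpath t)
  have hG'cont : Continuous G' := by
    apply Continuous.clm_apply ?_ continuous_const
    exact hhessC.comp (continuous_const.add (continuous_id.smul continuous_const))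
  have hint : IntervalIntegrable G' MeasureTheory.volume 0 1 :=
    hG'cont.intervalIntegrable 0 1
  have hFTC : ∫ t in (0:ℝ)..1, G' t = gradient E x := by
    rw [intervalIntegral.integral_eq_sub_of_hasDerivAt (fun t _ => hderiv t) hint]
    simp [hG, hv, hg0]
  have key : gradient E x - mulVecE (hess x) v
      = ∫ t in (0:ℝ)..1, (G' t - mulVecE (hess x) v) := by
    rw [intervalIntegral.integral_sub hint (intervalIntegrable_const), hFTC]
    simp
  have hbound : ∀ t ∈ Set.Icc (0:ℝ) 1, ‖G' t - mulVecE (hess x) v‖ ≤ M * r ^ 2 * (1 - t) := by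
    intro t ht
    obtain ⟨ht0, ht1⟩ := ht
    have hmem : ‖(xstar + t • v) - xstar‖ < δ := by
      have : ‖(xstar + t • v) - xstar‖ = t * r := by
        simp [norm_smul, abs_of_nonneg ht0, hr]
      rw [this]
      calc t * r ≤ 1 * r := by nlinarith
        _ = r := one_mul r
        _ < δ := hx
    have hdiff : G' t - mulVecE (hess x) v
        = (LinearMap.toContinuousLinearMap
            (Matrix.toEuclideanLin (hess (xstar + t • v) - hess x))) v := by
      simp [hG', mulVecE, map_sub]
    rw [hdiff]
    have h1 : ‖(LinearMap.toContinuousLinearMap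
        (Matrix.toEuclideanLin (hess (xstar + t • v) - hess x))) v‖
        ≤ specNorm (hess (xstar + t • v) - hess x) * ‖v‖ :=
      ContinuousLinearMap.le_opNorm _ v
    have h2 : specNorm (hess (xstar + t • v) - hess x) ≤ M * ((1 - t) * r) := by
      have := hLip (xstar + t • v) x hmem hx
      have hd : ‖(xstar + t • v) - x‖ = (1 - t) * r := by
        have : (xstar + t • v) - x = -((1 - t) • v) := by
          rw [hv]; module
        rw [this, norm_neg, norm_smul, Real.norm_eq_abs,
          abs_of_nonneg (by linarith : (0:ℝ) ≤ 1 - t)]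
      rwa [hd] at this
    have hM0 : (0:ℝ) ≤ M * ((1-t) * r) := le_trans (norm_nonneg _) h2
    calc ‖_‖ ≤ specNorm (hess (xstar + t • v) - hess x) * ‖v‖ := h1
      _ ≤ (M * ((1 - t) * r)) * r := by
          apply mul_le_mul h2 (le_refl _) (norm_nonneg _)
          positivity
      _ = M * r ^ 2 * (1 - t) := by ring
  calc ‖gradient E x - mulVecE (hess x) v‖
      = ‖∫ t in (0:ℝ)..1, (G' t - mulVecE (hess x) v)‖ := by rw [key]
    _ ≤ ∫ t in (0:ℝ)..1, ‖G' t - mulVecE (hess x) v‖ :=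
        intervalIntegral.norm_integral_le_integral_norm (by norm_num)
    _ ≤ ∫ t in (0:ℝ)..1, M * r ^ 2 * (1 - t) := by
        apply intervalIntegral.integral_mono_on (by norm_num) ?_ ?_ hbound
        · exact (hG'cont.sub continuous_const).norm.intervalIntegrable 0 1
        · exact ((continuous_const.mul (continuous_const.sub continuous_id)).intervalIntegrable 0 1)
    _ = M / 2 * r ^ 2 := by
        rw [intervalIntegral.integral_const_mul]
        have : ∫ s in (0:ℝ)..1, (1 - s) = 1/2 := by
          rw [intervalIntegral.integral_sub intervalIntegrable_const
            (continuous_id'.intervalIntegrable 0 1)]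
          simp [integral_id]
          norm_num
        rw [this]; ring

end ThmAux

set_option maxHeartbeats 1600000 in
open ThmAux in
/-- Theorem 5.3 (single-step estimate, approximate eigenvectors, index k): under
Assumption (A) with index `k`, `κ = L/μ`, `α ∈ [0,1]` with `1 - α > κα(α+5)`, if
`r = ‖x - x*‖₂ < δ`, the columns of `V_k` are orthonormal eigenvectors of `∇²E(x)`
for its `k` smallest (negative, sorted) eigenvalues, `V̂_k` consists of the first `k`
columns of an orthogonal matrix with `‖V_k V_kᵀ - V̂_k V̂_kᵀ‖₂ ≤ α`,
`β = 2/(L(1-α²) + μ(1-α))` and `x⁺ = x - β (I - 2 V̂_k V̂_kᵀ) ∇E(x)`, then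
`‖x⁺ - x*‖₂ ≤ (1 - q(α)) r + c(α) r²` with
`q(α) = (2(1-α) - 2κα(α+5))/(κ(1-α²) + (1-α)) ∈ (0,1)` and
`c(α) = (M/μ)/(κ(1-α²) + (1-α)) > 0`. -/
theorem indexk_inexact_single_step {d k : ℕ} (hk : 1 ≤ k) (hkd : k ≤ d)
    (E : EVec d → ℝ)
    (hess : EVec d → Matrix (Fin d) (Fin d) ℝ)
    (xstar : EVec d) (δ M μ L : ℝ)
    (hA : AssumptionA k E hess xstar δ M μ L)
    (κ : ℝ) (hκ : κ = L / μ)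
    (α : ℝ) (hα0 : 0 ≤ α) (hα1 : α ≤ 1)
    (hαsmall : 1 - α > κ * α * (α + 5))
    (x : EVec d) (hx : ‖x - xstar‖ < δ)
    (Vk : Matrix (Fin d) (Fin k) ℝ) (hVkortho : Vkᵀ * Vk = 1)
    (lam : Fin k → ℝ) (hmono : Monotone lam) (hneg : ∀ i, lam i < 0)
    (heig : hess x * Vk = Vk * Matrix.diagonal lam)
    (Vhatk : Matrix (Fin d) (Fin k) ℝ)
    (hVhat : ∃ Vhatmk : Matrix (Fin d) (Fin (d - k)) ℝ,
      Matrix.fromCols Vhatk Vhatmk * (Matrix.fromCols Vhatk Vhatmk)ᵀ = 1)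
    (hclose : specNorm (Vk * Vkᵀ - Vhatk * Vhatkᵀ) ≤ α)
    (β : ℝ) (hβ : β = 2 / (L * (1 - α ^ 2) + μ * (1 - α)))
    (xplus : EVec d)
    (hstep : xplus = x - β • mulVecE (1 - (2 : ℝ) • (Vhatk * Vhatkᵀ)) (gradient E x)) :
    (2 * (1 - α) - 2 * κ * α * (α + 5)) / (κ * (1 - α ^ 2) + (1 - α)) ∈ Set.Ioo (0 : ℝ) 1 ∧
    0 < (M / μ) / (κ * (1 - α ^ 2) + (1 - α)) ∧
    ‖xplus - xstar‖ ≤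
      (1 - (2 * (1 - α) - 2 * κ * α * (α + 5)) / (κ * (1 - α ^ 2) + (1 - α))) * ‖x - xstar‖ +
        (M / μ) / (κ * (1 - α ^ 2) + (1 - α)) * ‖x - xstar‖ ^ 2 := by
  obtain ⟨hE, hgrad, hsymm, hg0, hδ, hM, hμ, hμL, hLip, heigAll⟩ := hA
  have hL : 0 < L := lt_trans hμ hμL
  have hκ1 : 1 < κ := by rw [hκ]; exact (one_lt_div hμ).2 hμL
  have hκμ : κ * μ = L := by rw [hκ]; field_simp
  have hα1' : α < 1 := by nlinarith [mul_nonneg (mul_nonneg (by linarith : (0:ℝ) ≤ κ) hα0) (by linarith : (0:ℝ) ≤ α + 5)]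
  -- denominators
  have hDκ : 0 < κ * (1 - α ^ 2) + (1 - α) := by nlinarith
  have hDμ : 0 < L * (1 - α ^ 2) + μ * (1 - α) := by nlinarith
  have hβpos : 0 < β := by rw [hβ]; positivity
  have hβDμ : β * (L * (1 - α ^ 2) + μ * (1 - α)) = 2 := by
    rw [hβ]; field_simp
  set q : ℝ := (2 * (1 - α) - 2 * κ * α * (α + 5)) / (κ * (1 - α ^ 2) + (1 - α)) with hqdef
  set cc : ℝ := (M / μ) / (κ * (1 - α ^ 2) + (1 - α)) with hccdef
  have hq0 : 0 < q := div_pos (by nlinarith) hDκ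
  have hq1 : q < 1 := by
    rw [hqdef, div_lt_one hDκ]
    nlinarith
  have hcpos : 0 < cc := div_pos (div_pos hM hμ) hDκ
  refine ⟨⟨hq0, hq1⟩, hcpos, ?_⟩
  -- abbreviations
  set r : ℝ := ‖x - xstar‖ with hrdef
  have hr0 : 0 ≤ r := norm_nonneg _
  -- numerator for the contraction factor
  set N : ℝ := L * (1 + α ^ 2 + 6 * α) - μ * (1 - α) with hN
  set Dm : ℝ := L * (1 - α ^ 2) + μ * (1 - α) with hDm
  have hNnn : 0 ≤ N := by rw [hN]; nlinarith
  -- scalar eigenvalue bound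
  have hsc : ∀ t : ℝ, μ ≤ t → t ≤ L → |1 - β * t| ≤ N / Dm := by
    intro t ht1 ht2
    have e1 : β * t * Dm = 2 * t := by linear_combination t * hβDμ
    rw [abs_le]
    constructor
    · rw [neg_le, le_div_iff₀ hDμ]
      nlinarith [e1, mul_nonneg hα0 hL.le]
    · rw [le_div_iff₀ hDμ]
      nlinarith [e1, mul_nonneg hα0 hL.le, mul_nonneg hα0 hμ.le,
        mul_nonneg (mul_nonneg hα0 hα0) hL.le]
  have hNDm : 0 ≤ N / Dm := div_nonneg hNnn hDμ.le
  -- eigen data at x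
  obtain ⟨u, lamu, huip, hueig, _, huneg, hupos, hubd⟩ := heigAll x hx
  have honu : Orthonormal ℝ u := on_of_ite huip
  have hd0 : 0 < d := lt_of_lt_of_le hk hkd
  -- symmetry of the Hessian as a bilinear identity
  have hsymx : ∀ w z : EVec d, (inner ℝ (mulVecE (hess x) w) z : ℝ) = inner ℝ w (mulVecE (hess x) z) := by
    intro w z
    rw [mulVecE_transpose, (hsymm x).eq]
  -- eigen equation for the columns of Vk
  have hcoleig : ∀ j, mulVecE (hess x) (colE Vk j) = lam j • colE Vk j := by
    intro j
    ext i
    have h1 := congrFun (congrFun heig i) j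
    rw [Matrix.mul_diagonal] at h1
    rw [PiLp.smul_apply, colE_apply, mulVecE_apply]
    rw [Matrix.mul_apply] at h1
    simp only [colE_apply]
    rw [h1, smul_eq_mul]
    ring
  -- orthogonality of columns of Vk to positive eigenvectors
  have horthVu : ∀ j (i : Fin d), k ≤ (i : ℕ) → (inner ℝ (colE Vk j) (u i) : ℝ) = 0 := by
    intro j i hi
    have h1 : (inner ℝ (mulVecE (hess x) (colE Vk j)) (u i) : ℝ)
        = inner ℝ (colE Vk j) (mulVecE (hess x) (u i)) := hsymx _ _
    rw [hcoleig j, hueig i, real_inner_smul_left, real_inner_smul_right] at h1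
    have h2 : lam j < lamu i := lt_trans (hneg j) (hupos i hi)
    have h3 : (lam j - lamu i) * (inner ℝ (colE Vk j) (u i) : ℝ) = 0 := by linarith [h1]
    rcases mul_eq_zero.mp h3 with h | h
    · exfalso; linarith
    · exact h
  have hQfix : ∀ i : Fin d, (i : ℕ) < k → mulVecE (Vk * Vkᵀ) (u i) = u i :=
    fun i hik => proj_fixes hd0 hkd Vk hVkortho u honu horthVu i hik
  have hQkill : ∀ i : Fin d, k ≤ (i : ℕ) → mulVecE (Vk * Vkᵀ) (u i) = 0 :=
    fun i hik => proj_kills Vk (u i) (fun j => horthVu j i hik)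
  -- Vhat orthonormal columns
  obtain ⟨Vm, hW⟩ := hVhat
  have hVhat1 : Vhatkᵀ * Vhatk = 1 :=
    block_ortho (by omega) Vhatk Vm hW
  -- expansion of v in the eigenbasis
  set v : EVec d := x - xstar with hvdef
  set cvec : Fin d → ℝ := fun i => (inner ℝ (u i) v : ℝ) with hcvec
  have hvexp : v = ∑ i, cvec i • u i := (on_basis_expansion hd0 honu v).symm
  have hnormv : ∑ i, (cvec i) ^ 2 = r ^ 2 := by
    rw [← norm_sq_on_sum honu cvec, ← hvexp]
  set Hv : EVec d := mulVecE (hess x) v with hHvdef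
  have hHvexp : Hv = ∑ i, (cvec i * lamu i) • u i := by
    rw [hHvdef, hvexp, mulVecE_sum]
    congr 1; ext i
    rw [mulVecE_smul, hueig i, smul_smul]
  have hnHv : ‖Hv‖ ≤ L * r := by
    have h1 : ‖Hv‖ ^ 2 = ∑ i, (cvec i * lamu i) ^ 2 := by
      rw [hHvexp]; exact norm_sq_on_sum honu _
    have h2 : ∑ i, (cvec i * lamu i) ^ 2 ≤ L ^ 2 * r ^ 2 := by
      rw [← hnormv, Finset.mul_sum]
      apply Finset.sum_le_sum
      intro i _
      have hb := (hubd i).2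
      have : (lamu i) ^ 2 ≤ L ^ 2 := by
        rw [← sq_abs]
        exact pow_le_pow_left₀ (abs_nonneg _) hb 2
      nlinarith [sq_nonneg (cvec i)]
    have h3 : ‖Hv‖ ^ 2 ≤ (L * r) ^ 2 := by rw [h1]; nlinarith
    exact sqle_aux h3 (mul_nonneg hL.le hr0)
  -- the contraction part w1
  set QHv : EVec d := mulVecE (Vk * Vkᵀ) Hv with hQHvdef
  set w1 : EVec d := v - β • Hv + (2 * β) • QHv with hw1def
  have hQHvexp : QHv = ∑ i, (cvec i * lamu i) • (if (i : ℕ) < k then u i else 0) := by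
    rw [hQHvdef, hHvexp, mulVecE_sum]
    congr 1; ext i
    rw [mulVecE_smul]
    by_cases hik : (i : ℕ) < k
    · rw [if_pos hik, hQfix i hik]
    · rw [if_neg hik, hQkill i (le_of_not_gt hik)]
  have hw1exp : w1 = ∑ i, (cvec i * (1 - β * |lamu i|)) • u i := by
    rw [hw1def, hvexp, hHvexp, hQHvexp, Finset.smul_sum, Finset.smul_sum,
      ← Finset.sum_sub_distrib, ← Finset.sum_add_distrib]
    apply Finset.sum_congr rfl
    intro i _
    by_cases hik : (i : ℕ) < k
    · rw [if_pos hik, abs_of_neg (huneg i hik)]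
      module
    · rw [if_neg hik, abs_of_pos (hupos i (le_of_not_gt hik))]
      rw [smul_zero, smul_zero, add_zero]
      module
  have hnw1 : ‖w1‖ ≤ (N / Dm) * r := by
    have h1 : ‖w1‖ ^ 2 = ∑ i, (cvec i * (1 - β * |lamu i|)) ^ 2 := by
      rw [hw1exp]; exact norm_sq_on_sum honu _
    have h2 : ∑ i, (cvec i * (1 - β * |lamu i|)) ^ 2 ≤ (N / Dm) ^ 2 * r ^ 2 := by
      rw [← hnormv, Finset.mul_sum]
      apply Finset.sum_le_sum
      intro i _
      have hbi := hsc |lamu i| (hubd i).1 (hubd i).2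
      have : (1 - β * |lamu i|) ^ 2 ≤ (N / Dm) ^ 2 := by
        rw [← sq_abs (1 - β * |lamu i|)]
        exact pow_le_pow_left₀ (abs_nonneg _) hbi 2
      nlinarith [sq_nonneg (cvec i)]
    have h3 : ‖w1‖ ^ 2 ≤ ((N / Dm) * r) ^ 2 := by rw [h1]; nlinarith
    exact sqle_aux h3 (mul_nonneg hNDm hr0)
  -- the perturbation part w2
  set w2 : EVec d := (2 * β) • mulVecE (Vhatk * Vhatkᵀ - Vk * Vkᵀ) Hv with hw2def
  have hnw2 : ‖w2‖ ≤ 2 * β * (α * (L * r)) := by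
    rw [hw2def, norm_smul, Real.norm_eq_abs, abs_of_pos (by linarith : (0:ℝ) < 2 * β)]
    apply mul_le_mul_of_nonneg_left ?_ (by linarith : (0:ℝ) ≤ 2 * β)
    calc ‖mulVecE (Vhatk * Vhatkᵀ - Vk * Vkᵀ) Hv‖
        ≤ specNorm (Vhatk * Vhatkᵀ - Vk * Vkᵀ) * ‖Hv‖ := norm_mulVecE_le _ _
      _ ≤ α * (L * r) := by
          apply mul_le_mul ?_ hnHv (norm_nonneg _) hα0
          rw [show Vhatk * Vhatkᵀ - Vk * Vkᵀ = -(Vk * Vkᵀ - Vhatk * Vhatkᵀ) from (neg_sub _ _).symm,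
            specNorm_neg]
          exact hclose
  -- the remainder part w3
  set ev : EVec d := gradient E x - Hv with hevdef
  have hrem : ‖ev‖ ≤ M / 2 * r ^ 2 :=
    taylor_rem E hess xstar δ M hE hgrad hg0 hLip x hx
  set w3 : EVec d := (-β) • (ev - (2:ℝ) • mulVecE (Vhatk * Vhatkᵀ) ev) with hw3def
  have hnw3 : ‖w3‖ ≤ β * (M / 2 * r ^ 2) := by
    rw [hw3def, norm_smul, Real.norm_eq_abs, abs_neg, abs_of_pos hβpos,
      refl_isometry Vhatk hVhat1 ev]
    exact mul_le_mul_of_nonneg_left hrem hβpos.le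
  -- the decomposition
  have hdecomp : xplus - xstar = w1 + w2 + w3 := by
    rw [hstep, hw1def, hw2def, hw3def, hQHvdef,
      mulVecE_sub_mat 1 ((2:ℝ) • (Vhatk * Vhatkᵀ)) (gradient E x), mulVecE_one,
      mulVecE_smul_mat]
    have hg : gradient E x = Hv + ev := by rw [hevdef]; abel
    rw [hg]
    rw [mulVecE_add (Vhatk * Vhatkᵀ) Hv ev,
      mulVecE_sub_mat (Vhatk * Vhatkᵀ) (Vk * Vkᵀ) Hv]
    rw [hvdef]
    module
  -- put everything together
  have htri : ‖xplus - xstar‖ ≤ ‖w1‖ + ‖w2‖ + ‖w3‖ := by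
    rw [hdecomp]; exact norm_add₃_le
  have hsum : ‖xplus - xstar‖ ≤ (N / Dm) * r + 2 * β * (α * (L * r)) + β * (M / 2 * r ^ 2) := by
    linarith [htri, hnw1, hnw2, hnw3]
  have hDmμ : Dm = μ * (κ * (1 - α ^ 2) + (1 - α)) := by
    rw [hDm, ← hκμ]; ring
  have hNκ : N = μ * (κ * (1 + α ^ 2 + 6 * α) - (1 - α)) := by
    rw [hN, ← hκμ]; ring
  have hLκ : L = κ * μ := hκμ.symm
  have heq1 : N / Dm + 2 * β * (α * L) = 1 - q := by
    rw [hqdef, hNκ, hβ, hDmμ, hLκ]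
    field_simp
    ring
  have heq2 : β * (M / 2) = cc := by
    rw [hccdef, hβ, hDmμ]
    field_simp
  calc ‖xplus - xstar‖ ≤ (N / Dm) * r + 2 * β * (α * (L * r)) + β * (M / 2 * r ^ 2) := hsum
    _ = (N / Dm + 2 * β * (α * L)) * r + (β * (M / 2)) * r ^ 2 := by ring
    _ = (1 - q) * r + cc * r ^ 2 := by rw [heq1, heq2]
end
end

section
/- Suppose E, x*, δ, M, μ, L satisfy Assumption (A) with index k (1 ≤ k ≤ d), let κ = L/μ, let α ∈ [0,1] satisfy 1 − α > κ·α·(α+5), and set η = 1 − α − κα(α+5) > 0, r̂ = 2μη/M, β = 2/(L(1−α²) + μ(1−α)). Let (x^{(n)})_{n≥0} ⊂ ℝ^d be a sequence such that for each n there exist a matrix V_k^{(n)} ∈ ℝ^{d×k} whose columns are orthonormal eigenvectors of ∇²E(x^{(n)}) corresponding to its k smallest eigenvalues and a matrix V̂_k^{(n)} ∈ ℝ^{d×k} consisting of the first k columns of a d×d orthogonal matrix with ‖V_k^{(n)}·(V_k^{(n)})ᵀ − V̂_k^{(n)}·(V̂_k^{(n)})ᵀ‖₂ ≤ α, and x^{(n+1)}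 = x^{(n)} − β·(I − 2·V̂_k^{(n)}·(V̂_k^{(n)})ᵀ)·∇E(x^{(n)}). If r₀ = ‖x^{(0)} − x*‖₂ < min{δ, r̂}, then for all n ≥ 0, ‖x^{(n)} − x*‖₂ ≤ (1 − 2η/(κ(1−α²) + 1 − α + 2η))^n · (r̂·r₀)/(r̂ − r₀); in particular x^{(n)} converges to x* as n → ∞. -/
open Matrix Finset Filter

noncomputable section

/-!
Write `e = x - x*` and `P = V Vᵀ`. The columns of `V` are eigenvectors of the symmetric Hessian for
its negative eigenvalues, so they are orthogonal to the remaining eigenvectors and, by a dimension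
count, `P` is the spectral projector onto the negative eigenspace. Hence the linearized step
`1 - β (1 - 2P) ∇²E(x)` has the eigenvalues `1 - β |λᵢ|` and norm at most `βL - 1`. Taylor's formula
with the `M`-Lipschitz Hessian and `‖P - P̂‖ ≤ α` bound the error of the actual step, and for the
chosen `β` this becomes `‖e⁺‖ ≤ (1 - s (1 - ‖e‖ / r̂)) ‖e‖` with `s = 2η / (κ(1-α²) + 1 - α)`.
Since `(1 - x)(1 + x) ≤ 1`, the quantity `r̂ / ‖e‖ - 1` then grows by at least the factor `1 + s`
per step, and `(1 + s)⁻¹ = 1 - 2η / (κ(1-α²) + 1 - α + 2η)`.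
-/

open scoped RealInnerProductSpace

section EuclideanMatrix

variable {m n : Type*} [Fintype m] [Fintype n] [DecidableEq n]

lemma norm_toEuclideanLin_le (A : Matrix m n ℝ) (v : EuclideanSpace ℝ n) :
    ‖toEuclideanLin A v‖ ≤ specNorm A * ‖v‖ :=
  (LinearMap.toContinuousLinearMap (toEuclideanLin A)).le_opNorm v

lemma inner_toEuclideanLin_left [DecidableEq m] (A : Matrix m n ℝ) (x : EuclideanSpace ℝ n)
    (y : EuclideanSpace ℝ m) : ⟪toEuclideanLin A x, y⟫ = ⟪x, toEuclideanLin Aᵀ y⟫ := by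
  rw [← conjTranspose_eq_transpose_of_trivial, toEuclideanLin_conjTranspose_eq_adjoint,
    LinearMap.adjoint_inner_right]

lemma norm_toEuclideanLin_of_transpose_mul_self {A : Matrix n n ℝ} (hA : Aᵀ * A = 1)
    (v : EuclideanSpace ℝ n) : ‖toEuclideanLin A v‖ = ‖v‖ := by
  rw [← sq_eq_sq₀ (norm_nonneg _) (norm_nonneg _), ← real_inner_self_eq_norm_sq,
    ← real_inner_self_eq_norm_sq, inner_toEuclideanLin_left, ← LinearMap.comp_apply,
    ← toLpLin_mul_same, hA, toLpLin_one, LinearMap.id_apply]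

lemma reflection_transpose_mul_self [DecidableEq m] {V : Matrix n m ℝ} (hV : Vᵀ * V = 1) :
    (1 - (2 : ℝ) • (V * Vᵀ))ᵀ * (1 - (2 : ℝ) • (V * Vᵀ)) = 1 := by
  have hP : (V * Vᵀ) * (V * Vᵀ) = V * Vᵀ := by
    rw [Matrix.mul_assoc, ← Matrix.mul_assoc Vᵀ, hV, Matrix.one_mul]
  simp only [transpose_sub, transpose_one, transpose_smul, transpose_mul, transpose_transpose,
    sub_mul, mul_sub, Matrix.one_mul, Matrix.mul_one, smul_mul_smul_comm, hP]
  module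

end EuclideanMatrix

lemma norm_apply_le_of_orthonormalBasis_eigen {ι E : Type*} [Fintype ι] [NormedAddCommGroup E]
    [InnerProductSpace ℝ E] (b : OrthonormalBasis ι ℝ E) (A : E →ₗ[ℝ] E) (g : ι → ℝ)
    (hA : ∀ i, A (b i) = g i • b i) {c : ℝ} (hc : 0 ≤ c) (hg : ∀ i, |g i| ≤ c) (w : E) :
    ‖A w‖ ≤ c * ‖w‖ := by
  have hcoord : ∀ i, ⟪b i, A w⟫ = g i * ⟪b i, w⟫ := fun i => by
    conv_lhs => rw [← b.sum_repr' w]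
    simp only [map_sum, map_smul, hA, smul_smul]
    rw [b.orthonormal.inner_right_fintype, mul_comm]
  have hsq : ‖A w‖ ^ 2 ≤ (c * ‖w‖) ^ 2 := by
    rw [← b.sum_sq_inner_right, mul_pow, ← b.sum_sq_inner_right, Finset.mul_sum]
    refine Finset.sum_le_sum fun i _ => ?_
    rw [hcoord, mul_pow]
    exact mul_le_mul_of_nonneg_right (sq_le_sq' (abs_le.1 (hg i)).1 (abs_le.1 (hg i)).2)
      (sq_nonneg _)
  exact abs_le_of_sq_le_sq' hsq (by positivity) |>.2

lemma norm_sub_sub_fderiv_le_of_lipschitz {E F : Type*} [NormedAddCommGroup E] [NormedSpace ℝ E]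
    [NormedAddCommGroup F] [NormedSpace ℝ F] {f : E → F} {f' : E → E →L[ℝ] F} {a y : E} {M : ℝ}
    (hf : ∀ z ∈ segment ℝ a y, HasFDerivAt f (f' z) z)
    (hf' : ∀ z ∈ segment ℝ a y, ‖f' z - f' y‖ ≤ M * ‖z - y‖) :
    ‖f y - f a - f' y (y - a)‖ ≤ M / 2 * ‖y - a‖ ^ 2 := by
  set e := y - a
  have hseg : ∀ t ∈ Set.Icc (0 : ℝ) 1, a + t • e ∈ segment ℝ a y := fun t ht => by
    rw [segment_eq_image']; exact ⟨t, ht, rfl⟩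
  set φ : ℝ → F := fun t => f (a + t • e) - f a - t • f' y e
  have hφ : ∀ t ∈ Set.Icc (0 : ℝ) 1, HasDerivAt φ (f' (a + t • e) e - f' y e) t := by
    intro t ht
    have hline : HasDerivAt (fun s : ℝ => a + s • e) e t := by
      simpa using ((hasDerivAt_id t).smul_const e).const_add a
    exact (((hf _ (hseg t ht)).comp_hasDerivAt t hline).sub_const _).sub
      (by simpa using (hasDerivAt_id t).smul_const (f' y e))
  have hB : ∀ t : ℝ,
      HasDerivAt (fun s => M * ‖e‖ ^ 2 * (s - s ^ 2 / 2)) (M * ‖e‖ ^ 2 * (1 - t)) t := fun t => by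
    simpa using (((hasDerivAt_id t).sub ((hasDerivAt_pow 2 t).div_const 2)).const_mul
      (M * ‖e‖ ^ 2))
  have hbound : ∀ t ∈ Set.Ico (0 : ℝ) 1, ‖f' (a + t • e) e - f' y e‖ ≤ M * ‖e‖ ^ 2 * (1 - t) := by
    intro t ht
    have hdist : a + t • e - y = (t - 1) • e := by simp only [e, sub_smul, one_smul]; abel
    calc ‖f' (a + t • e) e - f' y e‖ ≤ ‖f' (a + t • e) - f' y‖ * ‖e‖ :=
          (f' (a + t • e) - f' y).le_opNorm e
      _ ≤ M * ‖a + t • e - y‖ * ‖e‖ := by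
          gcongr; exact hf' _ (hseg t (Set.Ico_subset_Icc_self ht))
      _ = M * ‖e‖ ^ 2 * (1 - t) := by
          rw [hdist, norm_smul, Real.norm_eq_abs, abs_of_nonpos (by linarith [ht.2])]; ring
  have key := image_norm_le_of_norm_deriv_right_le_deriv_boundary
    (fun t ht => (hφ t ht).continuousAt.continuousWithinAt)
    (fun t ht => (hφ t (Set.Ico_subset_Icc_self ht)).hasDerivWithinAt) (by simp [φ]) hB hbound
    (Set.right_mem_Icc.2 zero_le_one)
  simpa [φ, e] using key.trans_eq (by ring)

section SpectralProjection

variable {d k : ℕ} {H : Matrix (Fin d) (Fin d) ℝ} {V : Matrix (Fin d) (Fin k) ℝ} {lam : Fin k → ℝ}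

lemma toEuclideanLin_transpose_eq_zero_of_eigenvector (hH : H.IsSymm)
    (hHV : H * V = V * diagonal lam) {v : EVec d} {c : ℝ} (hv : toEuclideanLin H v = c • v)
    (hc : ∀ j, lam j ≠ c) : toEuclideanLin Vᵀ v = 0 := by
  have hVH : Vᵀ * H = diagonal lam * Vᵀ := by
    rw [← hH.eq, ← transpose_mul, hHV, transpose_mul, diagonal_transpose]
  have hw : toEuclideanLin (diagonal lam) (toEuclideanLin Vᵀ v) = c • toEuclideanLin Vᵀ v := by
    rw [← LinearMap.comp_apply, ← toLpLin_mul_same, ← hVH, toLpLin_mul_same,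
      LinearMap.comp_apply, hv, map_smul]
  ext j
  have hj : (lam j - c) * toEuclideanLin Vᵀ v j = 0 := by
    have := congrArg (· j) hw
    simp only [toLpLin_apply, PiLp.toLp_apply, mulVec_diagonal, PiLp.smul_apply,
      smul_eq_mul] at this ⊢
    linarith
  exact (mul_eq_zero.1 hj).resolve_left (sub_ne_zero.2 (hc j))

variable (hH : H.IsSymm) (hHV : H * V = V * diagonal lam) (hlam : ∀ j, lam j < 0)
  {b : OrthonormalBasis (Fin d) ℝ (EVec d)} {ν : Fin d → ℝ}
  (hHb : ∀ i, toEuclideanLin H (b i) = ν i • b i) (hpos : ∀ i : Fin d, k ≤ (i : ℕ) → 0 < ν i)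
include hH hHV hlam hHb hpos

lemma toEuclideanLin_transpose_basis_eq_zero {i : Fin d} (hi : k ≤ (i : ℕ)) :
    toEuclideanLin Vᵀ (b i) = 0 :=
  toEuclideanLin_transpose_eq_zero_of_eigenvector hH hHV (hHb i)
    fun j => ((hlam j).trans (hpos i hi)).ne

/-- The columns of `V` are orthogonal to the eigenvectors with positive eigenvalue, and both
spaces have dimension `k`. -/
lemma range_toEuclideanLin_eq_span (hV : Vᵀ * V = 1) (hkd : k ≤ d) :
    LinearMap.range (toEuclideanLin V) = Submodule.span ℝ (Set.range (b ∘ Fin.castLE hkd)) := by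
  refine Submodule.eq_of_le_of_finrank_eq ?_ ?_
  · rintro _ ⟨y, rfl⟩
    rw [← b.sum_repr' (toEuclideanLin V y)]
    refine Submodule.sum_mem _ fun i _ => ?_
    by_cases hi : (i : ℕ) < k
    · exact Submodule.smul_mem _ _ (Submodule.subset_span ⟨⟨i, hi⟩, rfl⟩)
    · rw [real_inner_comm, inner_toEuclideanLin_left,
        toEuclideanLin_transpose_basis_eq_zero hH hHV hlam hHb hpos (not_lt.1 hi),
        inner_zero_right, zero_smul]
      exact Submodule.zero_mem _
  · have hinj : Function.Injective (toEuclideanLin V) := fun y z h => by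
      simpa [← LinearMap.comp_apply, ← toLpLin_mul_same, hV] using congrArg (toEuclideanLin Vᵀ) h
    rw [LinearMap.finrank_range_of_inj hinj, finrank_span_eq_card
      (b.orthonormal.linearIndependent.comp _ (Fin.castLE_injective hkd))]
    simp

lemma toEuclideanLin_mul_transpose_basis (hV : Vᵀ * V = 1) (hkd : k ≤ d) (i : Fin d) :
    toEuclideanLin (V * Vᵀ) (b i) = if (i : ℕ) < k then b i else 0 := by
  rw [toLpLin_mul_same, LinearMap.comp_apply]
  split_ifs with hi
  · obtain ⟨y, hy⟩ : b i ∈ LinearMap.range (toEuclideanLin V) := by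
      rw [range_toEuclideanLin_eq_span hH hHV hlam hHb hpos hV hkd]
      exact Submodule.subset_span ⟨⟨i, hi⟩, rfl⟩
    rw [← hy, ← LinearMap.comp_apply (toEuclideanLin Vᵀ), ← toLpLin_mul_same, hV, toLpLin_one,
      LinearMap.id_apply]
  · rw [toEuclideanLin_transpose_basis_eq_zero hH hHV hlam hHb hpos (not_lt.1 hi), map_zero]

variable (hneg : ∀ i : Fin d, (i : ℕ) < k → ν i < 0)
include hneg

lemma toEuclideanLin_linearizedStep_basis (hV : Vᵀ * V = 1) (hkd : k ≤ d) (β : ℝ) (i : Fin d) :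
    toEuclideanLin (1 - β • ((1 - (2 : ℝ) • (V * Vᵀ)) * H)) (b i) = (1 - β * |ν i|) • b i := by
  have hP := toEuclideanLin_mul_transpose_basis hH hHV hlam hHb hpos hV hkd i
  simp only [map_sub, map_smul, toLpLin_mul_same, toLpLin_one, LinearMap.sub_apply,
    LinearMap.smul_apply, LinearMap.comp_apply, LinearMap.id_apply, hHb] at hP ⊢
  rw [hP]
  split_ifs with hi
  · rw [abs_of_neg (hneg i hi)]; module
  · rw [abs_of_pos (hpos i (not_lt.1 hi))]; module

variable {μ L : ℝ} (hbnd : ∀ i, μ ≤ |ν i| ∧ |ν i| ≤ L)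
include hbnd

lemma norm_toEuclideanLin_linearizedStep_le (hV : Vᵀ * V = 1) (hkd : k ≤ d) (hμL : μ ≤ L) {β : ℝ}
    (hβ : 0 ≤ β) (hβ2 : 2 ≤ β * (L + μ)) (w : EVec d) :
    ‖toEuclideanLin (1 - β • ((1 - (2 : ℝ) • (V * Vᵀ)) * H)) w‖ ≤ (β * L - 1) * ‖w‖ := by
  refine norm_apply_le_of_orthonormalBasis_eigen b _ _
    (toEuclideanLin_linearizedStep_basis hH hHV hlam hHb hpos hneg hV hkd β)
    (by nlinarith) (fun i => abs_le.2 ⟨?_, ?_⟩) w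
  · nlinarith [(hbnd i).2]
  · nlinarith [(hbnd i).1]

lemma norm_inexact_step_le (hV : Vᵀ * V = 1) (hkd : k ≤ d) (hμL : μ ≤ L) {β : ℝ}
    (hβ : 0 ≤ β) (hβ2 : 2 ≤ β * (L + μ)) {Ph : Matrix (Fin d) (Fin d) ℝ} {α : ℝ}
    (hPh : specNorm (V * Vᵀ - Ph) ≤ α) (hα : 0 ≤ α) {g e : EVec d} {ε : ℝ}
    (hg : ‖g - toEuclideanLin H e‖ ≤ ε) :
    ‖e - β • toEuclideanLin (1 - (2 : ℝ) • Ph) g‖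
      ≤ (β * L - 1) * ‖e‖ + β * ε + 2 * β * α * (L * ‖e‖ + ε) := by
  set R : Matrix (Fin d) (Fin d) ℝ := 1 - (2 : ℝ) • (V * Vᵀ)
  have hHe : ‖toEuclideanLin H e‖ ≤ L * ‖e‖ :=
    norm_apply_le_of_orthonormalBasis_eigen b _ ν hHb (by nlinarith) (fun i => (hbnd i).2) e
  have hgL : ‖g‖ ≤ L * ‖e‖ + ε := by
    calc ‖g‖ ≤ ‖toEuclideanLin H e‖ + ‖g - toEuclideanLin H e‖ := norm_le_insert' _ _
      _ ≤ L * ‖e‖ + ε := add_le_add hHe hg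
  have hsplit : e - β • toEuclideanLin (1 - (2 : ℝ) • Ph) g
      = toEuclideanLin (1 - β • (R * H)) e - β • toEuclideanLin R (g - toEuclideanLin H e)
        - (2 * β) • toEuclideanLin (V * Vᵀ - Ph) g := by
    simp only [R, map_sub, map_smul, toLpLin_mul_same, toLpLin_one, LinearMap.sub_apply,
      LinearMap.smul_apply, LinearMap.comp_apply, LinearMap.id_apply]
    module
  calc ‖e - β • toEuclideanLin (1 - (2 : ℝ) • Ph) g‖
      ≤ ‖toEuclideanLin (1 - β • (R * H)) e‖ + β * ‖toEuclideanLin R (g - toEuclideanLin H e)‖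
        + 2 * β * ‖toEuclideanLin (V * Vᵀ - Ph) g‖ := by
        rw [hsplit]
        refine (norm_sub_le _ _).trans (add_le_add ((norm_sub_le _ _).trans ?_) ?_) <;>
          simp only [norm_smul, Real.norm_eq_abs, abs_of_nonneg hβ, le_refl,
            abs_of_nonneg (by positivity : (0 : ℝ) ≤ 2 * β)]
    _ ≤ (β * L - 1) * ‖e‖ + β * ε + 2 * β * (α * (L * ‖e‖ + ε)) := by
        gcongr
        · exact norm_toEuclideanLin_linearizedStep_le hH hHV hlam hHb hpos hneg hbnd hV hkd hμL hβ
            hβ2 e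
        · rw [norm_toEuclideanLin_of_transpose_mul_self (reflection_transpose_mul_self hV)]
          exact hg
        · exact (norm_toEuclideanLin_le _ _).trans (mul_le_mul hPh hgL (norm_nonneg _) hα)
    _ = (β * L - 1) * ‖e‖ + β * ε + 2 * β * α * (L * ‖e‖ + ε) := by ring

end SpectralProjection

lemma step_params_bounds {μ L α κ η : ℝ} (hμ : 0 < μ) (hμL : μ < L) (hα : 0 ≤ α) (hκ : κ = L / μ)
    (hη : η = 1 - α - κ * α * (α + 5)) (hηpos : 0 < η) :
    1 ≤ κ ∧ α < 1 ∧ 2 * η ≤ κ * (1 - α ^ 2) + 1 - α := by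
  have hκ1 : 1 ≤ κ := by rw [hκ, le_div_iff₀ hμ]; linarith
  have hκα : 0 ≤ κ * α * (α + 5) := by positivity
  exact ⟨hκ1, by nlinarith, by nlinarith⟩

lemma error_bound_le_contraction {μ L α κ η M rhat β ρ : ℝ} (hμ : 0 < μ) (hμL : μ < L)
    (hM : 0 < M) (hα : 0 ≤ α) (hκ : κ = L / μ) (hη : η = 1 - α - κ * α * (α + 5)) (hηpos : 0 < η)
    (hrhat : rhat = 2 * μ * η / M) (hβ : β = 2 / (L * (1 - α ^ 2) + μ * (1 - α)))
    (hρ0 : 0 ≤ ρ) (hρ : ρ ≤ rhat) :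
    (β * L - 1) * ρ + β * (M / 2 * ρ ^ 2) + 2 * β * α * (L * ρ + M / 2 * ρ ^ 2)
      ≤ (1 - 2 * η / (κ * (1 - α ^ 2) + 1 - α) * (1 - ρ / rhat)) * ρ := by
  obtain ⟨hκ1, hα1, -⟩ := step_params_bounds hμ hμL hα hκ hη hηpos
  have hL : L = κ * μ := by rw [hκ, div_mul_cancel₀ _ hμ.ne']
  set D := κ * (1 - α ^ 2) + 1 - α
  have hD : 0 < D := by nlinarith
  have hρM : M * ρ / μ ≤ 2 * η := by
    rw [hrhat, le_div_iff₀ hM] at hρ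
    rw [div_le_iff₀ hμ]; linarith
  have hη1 : η ≤ 1 := by
    nlinarith [mul_nonneg (mul_nonneg (by linarith : 0 ≤ κ) hα) (by linarith : 0 ≤ α + 5)]
  have hdiff : (1 - 2 * η / D * (1 - ρ / rhat)) * ρ
      - ((β * L - 1) * ρ + β * (M / 2 * ρ ^ 2) + 2 * β * α * (L * ρ + M / 2 * ρ ^ 2))
      = ρ * α * (6 * κ - 2 * (M * ρ / μ)) / D := by
    have hβD : β = 2 / (μ * D) := by rw [hβ, hL]; congr 1; ring
    rw [hβD, hL, hrhat]
    field_simp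
    simp only [D]
    rw [hη]
    ring
  have hslack : 0 ≤ ρ * α * (6 * κ - 2 * (M * ρ / μ)) / D :=
    div_nonneg (mul_nonneg (mul_nonneg hρ0 hα) (by linarith)) hD.le
  linarith

lemma stepSize_bounds {μ L α β : ℝ} (hμ : 0 < μ) (hμL : μ < L) (hα0 : 0 ≤ α) (hα1 : α < 1)
    (hβ : β = 2 / (L * (1 - α ^ 2) + μ * (1 - α))) : 0 ≤ β ∧ 2 ≤ β * (L + μ) := by
  have hden : 0 < L * (1 - α ^ 2) + μ * (1 - α) := by
    nlinarith [mul_pos hμ (by linarith : 0 < 1 - α), mul_nonneg (by linarith : 0 ≤ L)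
      (by nlinarith : 0 ≤ 1 - α ^ 2)]
  refine ⟨hβ ▸ by positivity, ?_⟩
  rw [hβ, div_mul_eq_mul_div, le_div_iff₀ hden]
  nlinarith

section QuadraticContraction

variable {s R : ℝ}

lemma quadratic_step_invariant {K c u v : ℝ} (hs0 : 0 ≤ s) (hs1 : s ≤ 1) (hR : 0 < R)
    (hK : 0 ≤ K) (hc : 0 ≤ c) (hu0 : 0 ≤ u) (huR : u ≤ R) (hinv : K * u ≤ (R - u) * c)
    (hv : v ≤ (1 - s * (1 - u / R)) * u) :
    (1 + s) * K * v ≤ (R - v) * c := by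
  set x := s * (1 - u / R)
  have hx0 : 0 ≤ x := mul_nonneg hs0 (by rw [sub_nonneg, div_le_one hR]; exact huR)
  have hx1 : x ≤ 1 := by nlinarith [div_nonneg hu0 hR.le]
  have hRx : (1 + s) * (R - u) + u = R * (1 + x) := by
    simp only [x]; field_simp; ring
  calc (1 + s) * K * v
      ≤ (1 + s) * K * ((1 - x) * u) := by gcongr
    _ = (1 - x) * (1 + s) * (K * u) := by ring
    _ ≤ (1 - x) * (1 + s) * ((R - u) * c) := by gcongr
    _ = (1 - x) * (1 + x) * R * c - (1 - x) * u * c := by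
        linear_combination (1 - x) * c * hRx
    _ ≤ (R - v) * c := by
        nlinarith [mul_le_mul_of_nonneg_right hv hc,
          mul_nonneg (sq_nonneg x) (mul_nonneg hR.le hc)]

lemma le_of_quadratic_contraction {e : ℕ → ℝ} (hs0 : 0 ≤ s) (hs1 : s ≤ 1)
    (he : ∀ n, 0 ≤ e n) (hR : e 0 < R)
    (hstep : ∀ n, e n ≤ e 0 → e (n + 1) ≤ (1 - s * (1 - e n / R)) * e n) (n : ℕ) :
    e n ≤ (1 + s)⁻¹ ^ n * (R * e 0 / (R - e 0)) := by
  have hRpos : 0 < R := (he 0).trans_lt hR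
  -- `R / e n - 1 ≥ (1 + s) ^ n * (R / e 0 - 1)`, cleared of denominators
  have hinv : ∀ n, (1 + s) ^ n * (R - e 0) * e n ≤ (R - e n) * e 0 := by
    intro n
    induction n with
    | zero => simp [mul_comm]
    | succ n ih =>
      have hK : R - e 0 ≤ (1 + s) ^ n * (R - e 0) :=
        le_mul_of_one_le_left (by linarith) (one_le_pow₀ (by linarith))
      have hle : e n ≤ e 0 := by nlinarith [he n, he 0]
      rw [pow_succ, mul_comm _ (1 + s), mul_assoc (1 + s)]
      exact quadratic_step_invariant hs0 hs1 hRpos (by linarith) (he 0) (he n) (by linarith) ih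
        (hstep n hle)
  rw [inv_pow, ← div_eq_inv_mul, le_div_iff₀ (pow_pos (by linarith) n),
    le_div_iff₀ (by linarith)]
  nlinarith [hinv n, mul_nonneg (he n) (he 0)]

end QuadraticContraction

namespace AssumptionA

variable {d k : ℕ} {E : EVec d → ℝ} {hess : EVec d → Matrix (Fin d) (Fin d) ℝ} {xstar : EVec d}
  {δ M μ L : ℝ}

lemma norm_gradient_sub_hess_le (hA : AssumptionA k E hess xstar δ M μ L) {y : EVec d}
    (hy : ‖y - xstar‖ < δ) :
    ‖gradient E y - toEuclideanLin (hess y) (y - xstar)‖ ≤ M / 2 * ‖y - xstar‖ ^ 2 := by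
  obtain ⟨-, hderiv, -, hgrad0, hδ, -, -, -, hLip, -⟩ := hA
  have hseg : segment ℝ xstar y ⊆ Metric.ball xstar δ :=
    (convex_ball xstar δ).segment_subset (Metric.mem_ball_self hδ) (mem_ball_iff_norm.2 hy)
  have key := norm_sub_sub_fderiv_le_of_lipschitz (fun z _ => hderiv z) fun z hz => by
    rw [← map_sub, ← map_sub]
    exact hLip z y (mem_ball_iff_norm.1 (hseg hz)) hy
  rwa [hgrad0, sub_zero] at key

lemma exists_orthonormalBasis_eigen (hA : AssumptionA k E hess xstar δ M μ L) {y : EVec d}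
    (hy : ‖y - xstar‖ < δ) :
    ∃ (b : OrthonormalBasis (Fin d) ℝ (EVec d)) (ν : Fin d → ℝ),
      (∀ i, toEuclideanLin (hess y) (b i) = ν i • b i) ∧ (∀ i : Fin d, (i : ℕ) < k → ν i < 0) ∧
      (∀ i : Fin d, k ≤ (i : ℕ) → 0 < ν i) ∧ ∀ i, μ ≤ |ν i| ∧ |ν i| ≤ L := by
  obtain ⟨-, -, -, -, -, -, -, -, -, heig⟩ := hA
  obtain ⟨u, ν, hu, hHu, -, hneg, hpos, hbnd⟩ := heig y hy
  have hon : Orthonormal ℝ u := orthonormal_iff_ite.2 hu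
  refine ⟨.mk hon (hon.linearIndependent.span_eq_top_of_card_eq_finrank' (by simp)).ge, ν,
    fun i => ?_, hneg, hpos, hbnd⟩
  rw [OrthonormalBasis.coe_mk]
  exact hHu i

lemma norm_iterate_sub_le (hA : AssumptionA k E hess xstar δ M μ L) (hkd : k ≤ d) {y : EVec d}
    (hy : ‖y - xstar‖ < δ) {V Vh : Matrix (Fin d) (Fin k) ℝ} {lam : Fin k → ℝ}
    (hV : Vᵀ * V = 1) (hlam : ∀ j, lam j < 0) (hHV : hess y * V = V * diagonal lam) {α β : ℝ}
    (hVh : specNorm (V * Vᵀ - Vh * Vhᵀ) ≤ α) (hα : 0 ≤ α) (hβ : 0 ≤ β)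
    (hβ2 : 2 ≤ β * (L + μ)) :
    ‖y - β • mulVecE (1 - (2 : ℝ) • (Vh * Vhᵀ)) (gradient E y) - xstar‖
      ≤ (β * L - 1) * ‖y - xstar‖ + β * (M / 2 * ‖y - xstar‖ ^ 2)
        + 2 * β * α * (L * ‖y - xstar‖ + M / 2 * ‖y - xstar‖ ^ 2) := by
  obtain ⟨-, -, hsymm, -, -, -, -, hμL, -⟩ := id hA
  obtain ⟨b, ν, hHb, hneg, hpos, hbnd⟩ := hA.exists_orthonormalBasis_eigen hy
  rw [sub_right_comm]
  exact norm_inexact_step_le (hsymm y) hHV hlam hHb hpos hneg hbnd hV hkd hμL.le hβ hβ2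
    hVh hα (hA.norm_gradient_sub_hess_le hy)

end AssumptionA

theorem indexk_inexact_convergence_general {d k : ℕ} (hkd : k ≤ d)
    (E : EVec d → ℝ)
    (hess : EVec d → Matrix (Fin d) (Fin d) ℝ)
    (xstar : EVec d) (δ M μ L : ℝ)
    (hA : AssumptionA k E hess xstar δ M μ L)
    (κ : ℝ) (hκ : κ = L / μ)
    (α : ℝ) (hα0 : 0 ≤ α)
    (hαsmall : 1 - α > κ * α * (α + 5))
    (η rhat β : ℝ) (hη : η = 1 - α - κ * α * (α + 5))
    (hrhat : rhat = 2 * μ * η / M) (hβ : β = 2 / (L * (1 - α ^ 2) + μ * (1 - α)))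
    (x : ℕ → EVec d)
    (hstep : ∀ n : ℕ, ∃ (Vk Vhatk : Matrix (Fin d) (Fin k) ℝ) (lam : Fin k → ℝ),
      Vkᵀ * Vk = 1 ∧
      Monotone lam ∧ (∀ i, lam i < 0) ∧
      hess (x n) * Vk = Vk * Matrix.diagonal lam ∧
      (∃ Vhatmk : Matrix (Fin d) (Fin (d - k)) ℝ,
        Matrix.fromCols Vhatk Vhatmk * (Matrix.fromCols Vhatk Vhatmk)ᵀ = 1) ∧
      specNorm (Vk * Vkᵀ - Vhatk * Vhatkᵀ) ≤ α ∧
      x (n + 1) = x n - β • mulVecE (1 - (2 : ℝ) • (Vhatk * Vhatkᵀ)) (gradient E (x n)))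
    (h0 : ‖x 0 - xstar‖ < min δ rhat) :
    (∀ n : ℕ, ‖x n - xstar‖ ≤
      (1 - 2 * η / (κ * (1 - α ^ 2) + 1 - α + 2 * η)) ^ n *
        (rhat * ‖x 0 - xstar‖ / (rhat - ‖x 0 - xstar‖))) ∧
    Tendsto x atTop (nhds xstar) := by
  obtain ⟨-, -, -, -, -, hM, hμ, hμL, -⟩ := id hA
  have hηpos : 0 < η := by linarith
  obtain ⟨-, hα1, h2η⟩ := step_params_bounds hμ hμL hα0 hκ hη hηpos
  obtain ⟨hβ0, hβ2⟩ := stepSize_bounds hμ hμL hα0 hα1 hβ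
  set D := κ * (1 - α ^ 2) + 1 - α
  have hD : 0 < D := by linarith
  have hδ0 : ‖x 0 - xstar‖ < δ := h0.trans_le (min_le_left _ _)
  have hr0 : ‖x 0 - xstar‖ < rhat := h0.trans_le (min_le_right _ _)
  have hrec : ∀ n, ‖x n - xstar‖ ≤ ‖x 0 - xstar‖ → ‖x (n + 1) - xstar‖
      ≤ (1 - 2 * η / D * (1 - ‖x n - xstar‖ / rhat)) * ‖x n - xstar‖ := fun n hn => by
    obtain ⟨V, Vh, lam, hV, -, hlam, hHV, -, hVh, hx⟩ := hstep n
    rw [hx]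
    exact (hA.norm_iterate_sub_le hkd (hn.trans_lt hδ0) hV hlam hHV hVh hα0 hβ0 hβ2).trans
      (error_bound_le_contraction hμ hμL hM hα0 hκ hη hηpos hrhat hβ (norm_nonneg _)
        (hn.trans hr0.le))
  have hbound := le_of_quadratic_contraction (by positivity) ((div_le_one hD).2 h2η)
    (fun n => norm_nonneg (x n - xstar)) hr0 hrec
  have hrate : 1 - 2 * η / (D + 2 * η) = (1 + 2 * η / D)⁻¹ := by field_simp; ring
  rw [hrate]
  refine ⟨hbound, tendsto_iff_norm_sub_tendsto_zero.2 ?_⟩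
  refine squeeze_zero (fun n => norm_nonneg _) hbound ?_
  simpa using (tendsto_pow_atTop_nhds_zero_of_lt_one (by positivity)
    (inv_lt_one_of_one_lt₀ (lt_add_of_pos_right 1 (by positivity)))).mul_const
    (rhat * ‖x 0 - xstar‖ / (rhat - ‖x 0 - xstar‖))

/-- Theorem 5.4 (convergence, approximate eigenvectors, index k): under Assumption (A)
with index `k`, `κ = L/μ`, `α ∈ [0,1]` with `1 - α > κα(α+5)`, `η = 1 - α - κα(α+5)`,
`r̂ = 2μη/M`, `β = 2/(L(1-α²) + μ(1-α))`, if in each step the iteration uses the first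
`k` columns `V̂_k⁽ⁿ⁾` of an orthogonal matrix with
`‖V_k⁽ⁿ⁾ (V_k⁽ⁿ⁾)ᵀ - V̂_k⁽ⁿ⁾ (V̂_k⁽ⁿ⁾)ᵀ‖₂ ≤ α`, where the columns of `V_k⁽ⁿ⁾` are
orthonormal eigenvectors of `∇²E(x⁽ⁿ⁾)` for its `k` smallest eigenvalues, and
`r₀ = ‖x⁽⁰⁾ - x*‖₂ < min {δ, r̂}`, then
`‖x⁽ⁿ⁾ - x*‖₂ ≤ (1 - 2η/(κ(1-α²) + 1 - α + 2η))ⁿ r̂ r₀ / (r̂ - r₀)` and `x⁽ⁿ⁾ → x*`. -/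
theorem indexk_inexact_convergence {d k : ℕ} (hk : 1 ≤ k) (hkd : k ≤ d)
    (E : EVec d → ℝ)
    (hess : EVec d → Matrix (Fin d) (Fin d) ℝ)
    (xstar : EVec d) (δ M μ L : ℝ)
    (hA : AssumptionA k E hess xstar δ M μ L)
    (κ : ℝ) (hκ : κ = L / μ)
    (α : ℝ) (hα0 : 0 ≤ α) (hα1 : α ≤ 1)
    (hαsmall : 1 - α > κ * α * (α + 5))
    (η rhat β : ℝ) (hη : η = 1 - α - κ * α * (α + 5))
    (hrhat : rhat = 2 * μ * η / M) (hβ : β = 2 / (L * (1 - α ^ 2) + μ * (1 - α)))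
    (x : ℕ → EVec d)
    (hstep : ∀ n : ℕ, ∃ (Vk Vhatk : Matrix (Fin d) (Fin k) ℝ) (lam : Fin k → ℝ),
      Vkᵀ * Vk = 1 ∧
      Monotone lam ∧ (∀ i, lam i < 0) ∧
      hess (x n) * Vk = Vk * Matrix.diagonal lam ∧
      (∃ Vhatmk : Matrix (Fin d) (Fin (d - k)) ℝ,
        Matrix.fromCols Vhatk Vhatmk * (Matrix.fromCols Vhatk Vhatmk)ᵀ = 1) ∧
      specNorm (Vk * Vkᵀ - Vhatk * Vhatkᵀ) ≤ α ∧
      x (n + 1) = x n - β • mulVecE (1 - (2 : ℝ) • (Vhatk * Vhatkᵀ)) (gradient E (x n)))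
    (h0 : ‖x 0 - xstar‖ < min δ rhat) :
    (∀ n : ℕ, ‖x n - xstar‖ ≤
      (1 - 2 * η / (κ * (1 - α ^ 2) + 1 - α + 2 * η)) ^ n *
        (rhat * ‖x 0 - xstar‖ / (rhat - ‖x 0 - xstar‖))) ∧
    Tendsto x atTop (nhds xstar) :=
  indexk_inexact_convergence_general hkd E hess xstar δ M μ L hA κ hκ α hα0 hαsmall η rhat β hη
    hrhat hβ x hstep h0
end
end

section
/- Let u₁, …, u_d be an orthonormal basis of ℝ^d, let λ₁, …, λ_d be real numbers with λ₁ ∈ [−L, −μ] and λ_i ∈ [μ, L] for 2 ≤ i ≤ d, where 0 < μ < L, and let H = Σ_{i=1}^d λ_i·u_i·u_iᵀ. Then for β = 2/(L+μ), the matrix Q = I − β·(I − 2·u₁·u₁ᵀ)·H satisfies ‖Q‖₂ ≤ (L−μ)/(L+μ). -/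
open Matrix Finset Filter

noncomputable section

lemma mulVecE_outer {d : ℕ} (v w x : EVec d) :
    mulVecE (outer v w) x = (inner ℝ w x : ℝ) • v := by
  ext i
  simp [mulVecE, Matrix.toEuclideanLin_apply, outer, Matrix.mulVec, dotProduct,
    PiLp.inner_apply, Finset.sum_mul, mul_comm, mul_assoc, mul_left_comm, Finset.mul_sum]

lemma mulVecE_one {d : ℕ} (x : EVec d) : mulVecE 1 x = x := by
  simp [mulVecE, Matrix.toEuclideanLin_apply]

lemma mulVecE_sub {d : ℕ} (A B : Matrix (Fin d) (Fin d) ℝ) (x : EVec d) :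
    mulVecE (A - B) x = mulVecE A x - mulVecE B x := by
  simp [mulVecE, map_sub]

lemma mulVecE_smul {d : ℕ} (c : ℝ) (A : Matrix (Fin d) (Fin d) ℝ) (x : EVec d) :
    mulVecE (c • A) x = c • mulVecE A x := by
  simp [mulVecE, _root_.map_smul]

lemma mulVecE_sum {d : ℕ} {ι : Type*} (s : Finset ι) (A : ι → Matrix (Fin d) (Fin d) ℝ) (x : EVec d) :
    mulVecE (∑ i ∈ s, A i) x = ∑ i ∈ s, mulVecE (A i) x := by
  simp [mulVecE, map_sum]

lemma mulVecE_mul {d : ℕ} (A B : Matrix (Fin d) (Fin d) ℝ) (x : EVec d) :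
    mulVecE (A * B) x = mulVecE A (mulVecE B x) := by
  simp [mulVecE, Matrix.toEuclideanLin_apply, Matrix.mulVec_mulVec]

lemma scalar_bound {μ L lam β : ℝ} (hμ : 0 < μ) (hμL : μ < L)
    (hlam : lam ∈ Set.Icc μ L) (hβ : β = 2 / (L + μ)) :
    |1 - β * lam| ≤ (L - μ) / (L + μ) := by
  have hpos : 0 < L + μ := by linarith
  have h2 : 1 - β * lam = (L + μ - 2 * lam) / (L + μ) := by
    rw [hβ]; field_simp
  rw [h2, abs_div, abs_of_pos hpos, div_le_div_iff_of_pos_right hpos]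
  obtain ⟨h3, h4⟩ := hlam
  rw [abs_le]; constructor <;> linarith

/-- Bound (4.6) in the proof of Theorem 4.1: if `H = Σᵢ λᵢ uᵢ uᵢᵀ` with `u₁, …, u_d`
orthonormal, `λ₁ ∈ [-L, -μ]`, `λᵢ ∈ [μ, L]` for `i ≥ 2` and `β = 2/(L+μ)`, then
`Q = I - β (I - 2 u₁ u₁ᵀ) H` satisfies `‖Q‖₂ ≤ (L-μ)/(L+μ)`. -/
theorem Q_norm_bound_exact_index1 {d : ℕ} (hd : 0 < d) (u : Fin d → EVec d)
    (hortho : ∀ i j, (inner ℝ (u i) (u j) : ℝ) = if i = j then 1 else 0)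
    (lam : Fin d → ℝ) (μ L : ℝ) (hμ : 0 < μ) (hμL : μ < L)
    (hlam1 : lam ⟨0, hd⟩ ∈ Set.Icc (-L) (-μ))
    (hlam : ∀ i : Fin d, i ≠ ⟨0, hd⟩ → lam i ∈ Set.Icc μ L)
    (β : ℝ) (hβ : β = 2 / (L + μ)) :
    specNorm (1 - β • ((1 - (2 : ℝ) • outer (u ⟨0, hd⟩) (u ⟨0, hd⟩)) *
        ∑ i, lam i • outer (u i) (u i))) ≤ (L - μ) / (L + μ) := by
  classical
  have hpos : 0 < L + μ := by linarith
  set M : ℝ := (L - μ) / (L + μ) with hM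
  have hM0 : 0 ≤ M := div_nonneg (by linarith) (by linarith)
  set i0 : Fin d := ⟨0, hd⟩
  -- orthonormality
  have hon : Orthonormal ℝ u := by
    rw [orthonormal_iff_ite]; exact hortho
  have : Nonempty (Fin d) := ⟨i0⟩
  have card_eq : Fintype.card (Fin d) = Module.finrank ℝ (EVec d) := by
    simp [finrank_euclideanSpace]
  have hsp : ⊤ ≤ Submodule.span ℝ (Set.range u) := by
    rw [← coe_basisOfOrthonormalOfCardEqFinrank hon card_eq]
    exact (basisOfOrthonormalOfCardEqFinrank hon card_eq).span_eq.ge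
  let b : OrthonormalBasis (Fin d) ℝ (EVec d) := OrthonormalBasis.mk hon hsp
  have hb : ⇑b = u := OrthonormalBasis.coe_mk hon hsp
  -- the matrix
  set H : Matrix (Fin d) (Fin d) ℝ := ∑ i, lam i • outer (u i) (u i) with hHdef
  set Q : Matrix (Fin d) (Fin d) ℝ :=
    1 - β • ((1 - (2 : ℝ) • outer (u i0) (u i0)) * H) with hQdef
  -- coefficients
  set c : Fin d → ℝ := fun i => if i = i0 then 1 + β * lam i else 1 - β * lam i with hc
  have hcM : ∀ i, |c i| ≤ M := by
    intro i
    by_cases h : i = i0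
    · simp only [hc, h, if_pos rfl]
      have : 1 + β * lam i0 = 1 - β * (-(lam i0)) := by ring
      rw [this]
      exact scalar_bound hμ hμL ⟨by linarith [hlam1.2], by linarith [hlam1.1]⟩ hβ
    · simp only [hc, if_neg h]
      exact scalar_bound hμ hμL (hlam i h) hβ
  -- action of H
  have hH : ∀ x : EVec d, mulVecE H x = ∑ i, (lam i * (inner ℝ (u i) x : ℝ)) • u i := by
    intro x
    rw [hHdef, mulVecE_sum]
    refine Finset.sum_congr rfl fun i _ => ?_
    rw [mulVecE_smul, mulVecE_outer, smul_smul]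
  -- inner products with u j
  have hinH : ∀ (j : Fin d) (x : EVec d),
      (inner ℝ (u j) (mulVecE H x) : ℝ) = lam j * (inner ℝ (u j) x : ℝ) := by
    intro j x
    rw [hH, inner_sum]
    simp only [real_inner_smul_right, hortho]
    rw [Finset.sum_eq_single j]
    · simp
    · intro i _ hij
      simp [if_neg (Ne.symm hij).symm, hij.symm]
    · simp
  -- full action of Q
  have hQ : ∀ (j : Fin d) (x : EVec d),
      (inner ℝ (u j) (mulVecE Q x) : ℝ) = c j * (inner ℝ (u j) x : ℝ) := by
    intro j x
    have expand : mulVecE Q x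
        = x - β • (mulVecE H x - (2 : ℝ) • ((inner ℝ (u i0) (mulVecE H x) : ℝ) • u i0)) := by
      rw [hQdef, mulVecE_sub, mulVecE_one, mulVecE_smul, mulVecE_mul, mulVecE_sub,
        mulVecE_one, mulVecE_smul, mulVecE_outer]
    rw [expand, inner_sub_right, real_inner_smul_right, inner_sub_right,
      real_inner_smul_right, real_inner_smul_right, hinH, hinH, hortho]
    by_cases h : j = i0
    · subst h; simp [hc]; ring
    · simp [hc, if_neg h]; ring
  -- norm bound on Q x
  have key : ∀ x : EVec d, ‖mulVecE Q x‖ ≤ M * ‖x‖ := by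
    intro x
    have h1 : ‖mulVecE Q x‖ = ‖b.repr (mulVecE Q x)‖ := (b.repr.norm_map _).symm
    have h2 : ‖x‖ = ‖b.repr x‖ := (b.repr.norm_map _).symm
    rw [h1, h2, EuclideanSpace.norm_eq, EuclideanSpace.norm_eq]
    have hrQ : ∀ i, b.repr (mulVecE Q x) i = c i * (inner ℝ (u i) x : ℝ) := by
      intro i; rw [b.repr_apply_apply, hb, hQ]
    have hrx : ∀ i, b.repr x i = (inner ℝ (u i) x : ℝ) := by
      intro i; rw [b.repr_apply_apply, hb]
    rw [show M * Real.sqrt (∑ i, ‖b.repr x i‖ ^ 2)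
        = Real.sqrt (M ^ 2 * ∑ i, ‖b.repr x i‖ ^ 2) by
      rw [Real.sqrt_mul (sq_nonneg M), Real.sqrt_sq hM0]]
    apply Real.sqrt_le_sqrt
    rw [Finset.mul_sum]
    refine Finset.sum_le_sum fun i _ => ?_
    rw [hrQ, hrx]
    have := hcM i
    have habs : |c i * (inner ℝ (u i) x : ℝ)| ≤ M * |(inner ℝ (u i) x : ℝ)| := by
      rw [abs_mul]
      exact mul_le_mul_of_nonneg_right this (abs_nonneg _)
    calc ‖c i * (inner ℝ (u i) x : ℝ)‖ ^ 2 = |c i * (inner ℝ (u i) x : ℝ)| ^ 2 := by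
          rw [Real.norm_eq_abs]
      _ ≤ (M * |(inner ℝ (u i) x : ℝ)|) ^ 2 := by
          apply sq_le_sq' <;> nlinarith [abs_nonneg (c i * (inner ℝ (u i) x : ℝ))]
      _ = M ^ 2 * ‖(inner ℝ (u i) x : ℝ)‖ ^ 2 := by
          rw [Real.norm_eq_abs]; ring
  -- conclude
  rw [specNorm]
  apply ContinuousLinearMap.opNorm_le_bound _ hM0
  intro x
  exact key x
end
end
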